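/- Let i ∈ {1,…,N} and assume n_i > 0 and O_i ≠ 0. Then ‖(⟨w_i, ⟨V⟩_α⟩/n_i)·⟨V⟩_α − (⟨w_i, O_i⟩/n_i³)·O_i‖ ≤ 2 (‖w_i‖/n_i) √(Q_{i,n_iα}) ≤ 2 ρ_i √(Q_{i,n_iα}). -/

import Mathlib

/-!
Write `A = ⟨V⟩_α` and `B = O_i / n_i`. The vector to bound equals `n_i⁻¹ (⟨w, A⟩ A − ⟨w, B⟩ B)`,
and since `A` and `B` both lie in the unit ball, `‖⟨w, A⟩ A − ⟨w, B⟩ B‖ ≤ 2 ‖w‖ ‖A − B‖`. Moreover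
`⟨V⟩_α − B = −n_i⁻¹ Σ_j c_j V_j` with `c_j = ω_{ij} − n_i α_j`, and because `Σ_j c_j = 0`,
`‖Σ_j c_j V_j‖² = Σ_{j,j'} c_j c_{j'} (⟨V_j, V_{j'}⟩ − 1)`, where `1 − cos θ ≤ θ²/2` gives `Q_{i,n_iα}`.
The second inequality is `‖O_i‖ ≤ n_i`.
-/

open Finset
open scoped BigOperators RealInnerProductSpace

section InnerProductSpace

variable {E : Type*} [NormedAddCommGroup E] [InnerProductSpace ℝ E] {ι : Type*} [Fintype ι]

open InnerProductGeometry in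
theorem one_sub_inner_le_angle_sq_div_two {u v : E} (hu : ‖u‖ = 1) (hv : ‖v‖ = 1) :
    1 - ⟪u, v⟫ ≤ angle u v ^ 2 / 2 := by
  have hcos : ⟪u, v⟫ = Real.cos (angle u v) := by
    rw [cos_angle, hu, hv, mul_one, div_one]
  rw [hcos]
  linarith [Real.one_sub_sq_div_two_le_cos (x := angle u v)]

theorem norm_sum_smul_sq_le_of_sum_eq_zero {v : ι → E} (hv : ∀ j, ‖v j‖ = 1) {c : ι → ℝ}
    (hc : ∑ j, c j = 0) :
    ‖∑ j, c j • v j‖ ^ 2 ≤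
      ∑ j, ∑ j', |c j| * |c j'| * InnerProductGeometry.angle (v j) (v j') ^ 2 / 2 := by
  have hexpand : ‖∑ j, c j • v j‖ ^ 2 = ∑ j, ∑ j', c j * c j' * ⟪v j, v j'⟫ := by
    rw [← real_inner_self_eq_norm_sq, sum_inner]
    refine sum_congr rfl fun j _ => ?_
    rw [inner_sum]
    refine sum_congr rfl fun j' _ => ?_
    rw [real_inner_smul_left, real_inner_smul_right, mul_assoc]
  have hshift : ∑ j, ∑ j', c j * c j' * ⟪v j, v j'⟫ =
      ∑ j, ∑ j', c j * c j' * (⟪v j, v j'⟫ - 1) := by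
    have hzero : ∑ j, ∑ j', c j * c j' = 0 := by rw [← sum_mul_sum, hc, zero_mul]
    simp only [mul_sub, mul_one, sum_sub_distrib, hzero, sub_zero]
  rw [hexpand, hshift]
  gcongr with j _ j' _
  have hle : 1 - ⟪v j, v j'⟫ ≤ InnerProductGeometry.angle (v j) (v j') ^ 2 / 2 :=
    one_sub_inner_le_angle_sq_div_two (hv j) (hv j')
  have hnonneg : 0 ≤ 1 - ⟪v j, v j'⟫ := by
    have := real_inner_le_norm (v j) (v j')
    rw [hv, hv, mul_one] at this
    linarith
  calc c j * c j' * (⟪v j, v j'⟫ - 1) = -(c j * c j') * (1 - ⟪v j, v j'⟫) := by ring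
    _ ≤ |c j| * |c j'| * (1 - ⟪v j, v j'⟫) := by
        rw [← abs_mul]; exact mul_le_mul_of_nonneg_right (neg_le_abs _) hnonneg
    _ ≤ |c j| * |c j'| * (InnerProductGeometry.angle (v j) (v j') ^ 2 / 2) := by gcongr
    _ = _ := by ring

theorem norm_sum_smul_le_sum {v : ι → E} (hv : ∀ j, ‖v j‖ = 1) {a : ι → ℝ}
    (ha : ∀ j, 0 ≤ a j) : ‖∑ j, a j • v j‖ ≤ ∑ j, a j :=
  (norm_sum_le _ _).trans_eq <| sum_congr rfl fun j _ => by
    rw [norm_smul, hv, mul_one, Real.norm_of_nonneg (ha j)]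

theorem norm_sum_smul_sub_inv_smul_sum_le_sqrt {v : ι → E} (hv : ∀ j, ‖v j‖ = 1)
    {α ω : ι → ℝ} (hα : ∑ j, α j = 1) (hn : 0 < ∑ j, ω j) :
    ‖∑ j, α j • v j - (∑ j, ω j)⁻¹ • ∑ j, ω j • v j‖ ≤
      Real.sqrt ((1 / (∑ j, ω j) ^ 2) *
        ∑ j, ∑ j', |ω j - (∑ k, ω k) * α j| * |ω j' - (∑ k, ω k) * α j'| *
          InnerProductGeometry.angle (v j) (v j') ^ 2 / 2) := by
  set n := ∑ j, ω j
  set c : ι → ℝ := fun j => ω j - n * α j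
  have hc : ∑ j, c j = 0 := by simp only [c, sum_sub_distrib, ← mul_sum, hα, mul_one, n, sub_self]
  have hdiff : ∑ j, α j • v j - n⁻¹ • ∑ j, ω j • v j = -n⁻¹ • ∑ j, c j • v j := by
    simp only [smul_sum, ← sum_sub_distrib, smul_smul, ← sub_smul, c]
    refine sum_congr rfl fun j _ => congrArg (· • v j) ?_
    field_simp
    ring
  rw [hdiff, ← Real.sqrt_sq (norm_nonneg _), norm_smul, mul_pow, norm_neg, norm_inv,
    Real.norm_of_nonneg hn.le, inv_pow, ← one_div]
  gcongr
  exact norm_sum_smul_sq_le_of_sum_eq_zero hv hc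

theorem norm_inner_smul_sub_inner_smul_le (w : E) {a b : E} (ha : ‖a‖ ≤ 1) (hb : ‖b‖ ≤ 1) :
    ‖⟪w, a⟫ • a - ⟪w, b⟫ • b‖ ≤ 2 * ‖w‖ * ‖a - b‖ := by
  have hsplit : ⟪w, a⟫ • a - ⟪w, b⟫ • b = ⟪w, a⟫ • (a - b) + ⟪w, a - b⟫ • b := by
    rw [inner_sub_right, sub_smul, smul_sub]; abel
  have h₁ : |⟪w, a⟫| ≤ ‖w‖ :=
    (abs_real_inner_le_norm w a).trans (mul_le_of_le_one_right (norm_nonneg w) ha)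
  have h₂ : |⟪w, a - b⟫| ≤ ‖w‖ * ‖a - b‖ := abs_real_inner_le_norm w _
  calc ‖⟪w, a⟫ • a - ⟪w, b⟫ • b‖
      ≤ |⟪w, a⟫| * ‖a - b‖ + |⟪w, a - b⟫| * ‖b‖ := by
        rw [hsplit, ← Real.norm_eq_abs, ← Real.norm_eq_abs, ← norm_smul, ← norm_smul]
        exact norm_add_le _ _
    _ ≤ ‖w‖ * ‖a - b‖ + ‖w‖ * ‖a - b‖ * 1 := by gcongr
    _ = 2 * ‖w‖ * ‖a - b‖ := by ring

end InnerProductSpace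

theorem zeta6_norm_le_general
    (N : ℕ)
    (V : Fin N → EuclideanSpace ℝ (Fin 3)) (hV : ∀ i, ‖V i‖ = 1)
    (ω : Fin N → Fin N → ℝ) (hω : ∀ i j, ω i j = 0 ∨ ω i j = 1)
    (α : Fin N → ℝ) (hα : ∀ i, 0 ≤ α i) (hαsum : ∑ i, α i = 1)
    (n : Fin N → ℝ) (hn : ∀ i, n i = ∑ j, ω i j)
    (O : Fin N → EuclideanSpace ℝ (Fin 3)) (hO : ∀ i, O i = ∑ j, ω i j • V j)
    (Vα : EuclideanSpace ℝ (Fin 3)) (hVα : Vα = ∑ i, α i • V i)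
    (Q : Fin N → ℝ)
    (hQ : ∀ i, Q i = (1 / n i ^ 2) *
      ∑ j, ∑ j', |ω i j - n i * α j| * |ω i j' - n i * α j'| *
        InnerProductGeometry.angle (V j) (V j') ^ 2 / 2)
    (w : Fin N → EuclideanSpace ℝ (Fin 3))
    (i : Fin N) (hn0 : 0 < n i) (hO0 : O i ≠ 0) :
    ‖(⟪w i, Vα⟫ / n i) • Vα - (⟪w i, O i⟫ / n i ^ 3) • O i‖ ≤
        2 * (‖w i‖ / n i) * Real.sqrt (Q i) ∧
      2 * (‖w i‖ / n i) * Real.sqrt (Q i) ≤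
        2 * (‖w i‖ / ‖O i‖) * Real.sqrt (Q i) := by
  have hOle : ‖O i‖ ≤ n i := by
    rw [hO, hn]
    exact norm_sum_smul_le_sum hV fun j => by rcases hω i j with h | h <;> simp [h]
  have hVαle : ‖Vα‖ ≤ 1 := hVα ▸ hαsum ▸ norm_sum_smul_le_sum hV hα
  have hBle : ‖(n i)⁻¹ • O i‖ ≤ 1 := by
    rw [norm_smul, Real.norm_of_nonneg (inv_nonneg.2 hn0.le), inv_mul_le_one₀ hn0]
    exact hOle
  have hdist : ‖Vα - (n i)⁻¹ • O i‖ ≤ Real.sqrt (Q i) := by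
    rw [hVα, hO, hQ, hn]
    exact norm_sum_smul_sub_inv_smul_sum_le_sqrt hV hαsum (hn i ▸ hn0)
  have hrescale : (⟪w i, Vα⟫ / n i) • Vα - (⟪w i, O i⟫ / n i ^ 3) • O i =
      (n i)⁻¹ • (⟪w i, Vα⟫ • Vα - ⟪w i, (n i)⁻¹ • O i⟫ • (n i)⁻¹ • O i) := by
    rw [real_inner_smul_right]
    match_scalars <;> field_simp
  constructor
  · rw [hrescale, norm_smul, Real.norm_of_nonneg (inv_nonneg.2 hn0.le)]
    calc (n i)⁻¹ * ‖⟪w i, Vα⟫ • Vα - ⟪w i, (n i)⁻¹ • O i⟫ • (n i)⁻¹ • O i‖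
        ≤ (n i)⁻¹ * (2 * ‖w i‖ * Real.sqrt (Q i)) := by
          gcongr
          exact (norm_inner_smul_sub_inner_smul_le _ hVαle hBle).trans (by gcongr)
      _ = 2 * (‖w i‖ / n i) * Real.sqrt (Q i) := by ring
  · have : 0 < ‖O i‖ := norm_pos_iff.2 hO0
    gcongr

/-- Bound (A.14) on `ζ_{i,6}` in the proof of Proposition A.3:
`‖(⟨w_i,⟨V⟩_α⟩/n_i)⟨V⟩_α − (⟨w_i,O_i⟩/n_i³)O_i‖
  ≤ 2(‖w_i‖/n_i)√(Q_{i,n_iα}) ≤ 2 ρ_i √(Q_{i,n_iα})`. -/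
theorem zeta6_norm_le
    (N : ℕ) (hN : 0 < N)
    (V : Fin N → EuclideanSpace ℝ (Fin 3)) (hV : ∀ i, ‖V i‖ = 1)
    (ω : Fin N → Fin N → ℝ) (hω : ∀ i j, ω i j = 0 ∨ ω i j = 1)
    (α : Fin N → ℝ) (hα : ∀ i, 0 ≤ α i) (hαsum : ∑ i, α i = 1)
    (n : Fin N → ℝ) (hn : ∀ i, n i = ∑ j, ω i j)
    (O : Fin N → EuclideanSpace ℝ (Fin 3)) (hO : ∀ i, O i = ∑ j, ω i j • V j)
    (Vα : EuclideanSpace ℝ (Fin 3)) (hVα : Vα = ∑ i, α i • V i)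
    (Q : Fin N → ℝ)
    (hQ : ∀ i, Q i = (1 / n i ^ 2) *
      ∑ j, ∑ j', |ω i j - n i * α j| * |ω i j' - n i * α j'| *
        InnerProductGeometry.angle (V j) (V j') ^ 2 / 2)
    (w : Fin N → EuclideanSpace ℝ (Fin 3))
    (i : Fin N) (hn0 : 0 < n i) (hO0 : O i ≠ 0) :
    ‖(⟪w i, Vα⟫ / n i) • Vα - (⟪w i, O i⟫ / n i ^ 3) • O i‖ ≤
        2 * (‖w i‖ / n i) * Real.sqrt (Q i) ∧
      2 * (‖w i‖ / n i) * Real.sqrt (Q i) ≤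
        2 * (‖w i‖ / ‖O i‖) * Real.sqrt (Q i) :=
  zeta6_norm_le_general N V hV ω hω α hα hαsum n hn O hO Vα hVα Q hQ w i hn0 hO0
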